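/- arXiv:1703.10201 — 3 statements merged into one kernel-verified Lean document; each statement's English description precedes it below -/
import Mathlib

section
/- Let K ≥ 1 be a real number, ε a nonzero real number, and g : (0,1) → ℝ differentiable and nonvanishing. Suppose ψ, φ : (0,1) → ℂ are differentiable and satisfy i ε ψ′(r) = (g(r)/(K+1)) [K(1−r) ψ(r) − √K (1−r) φ(r)] and i ε φ′(r) = (g(r)/(K+1)) [−√K(1−r) ψ(r) + (1+rK) φ(r)] on (0,1). Then ψ is twice differentiable on (0,1) and satisfies the decoupled second-order equation ε² (1−r) ψ″(r) + ε [ε(1 − (g′(r)/g(r))(1−r)) + i(1−r) g(r)] ψ′(r) − (g(r)² K (1−r)² r/(K+1)) ψ(r) = 0 for all r ∈ (0,1). -/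
/-!
Differentiating the first equation and eliminating `φ` and `φ'` with both equations turns any
linear system `ψ' = aψ + bφ`, `φ' = cψ + dφ` into
`b ψ'' = (b' + b(a + d)) ψ' + (b a' - a b' + b(bc - ad)) ψ`.
Writing the Grover system with the rate `κ = g / (iε(K+1))`, one has `a = -√K b`, so
`b a' - a b' = 0`, while `a + d = (K+1)κ` and `bc - ad = -K(K+1) r κ² (1-r)`; dividing by
`-√K κ` and using `κ'/κ = g'/g` gives the stated equation.
-/

open Filter Topology

theorem mul_secondDeriv_eq_of_linear_system {R : Type*} [CommRing R]
    {ψ ψ' ψ'' φ φ' a a' b b' c d : R}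
    (hψ : ψ' = a * ψ + b * φ) (hφ : φ' = c * ψ + d * φ)
    (hψ' : ψ'' = a' * ψ + a * ψ' + (b' * φ + b * φ')) :
    b * ψ'' = (b' + b * (a + d)) * ψ' + (b * a' - a * b' + b * (b * c - a * d)) * ψ := by
  linear_combination b * hψ' + b ^ 2 * hφ - (b' + b * d) * hψ

theorem eq_div_mul_of_mul_eq {F : Type*} [Field F] {a b c z w : F} (ha : a ≠ 0)
    (h : a * z = b / c * w) : z = b / (a * c) * w := by
  rw [mul_comm a c, ← div_div, div_mul_eq_mul_div, eq_div_iff ha, mul_comm, h]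

section LinearSystem

variable {𝕜 𝔸 : Type*} [NontriviallyNormedField 𝕜] [NormedCommRing 𝔸] [NormedAlgebra 𝕜 𝔸]
  {ψ φ a b : 𝕜 → 𝔸} {a' b' : 𝔸} {x : 𝕜}

theorem hasDerivAt_deriv_of_linear_system
    (hψ : ∀ᶠ y in 𝓝 x, deriv ψ y = a y * ψ y + b y * φ y)
    (ha : HasDerivAt a a' x) (hb : HasDerivAt b b' x)
    (hψx : DifferentiableAt 𝕜 ψ x) (hφx : DifferentiableAt 𝕜 φ x) :
    HasDerivAt (deriv ψ) (a' * ψ x + a x * deriv ψ x + (b' * φ x + b x * deriv φ x)) x :=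
  ((ha.fun_mul hψx.hasDerivAt).fun_add (hb.fun_mul hφx.hasDerivAt)).congr_of_eventuallyEq hψ

theorem mul_deriv_deriv_eq_of_linear_system {c d : 𝕜 → 𝔸}
    (hψ : ∀ᶠ y in 𝓝 x, deriv ψ y = a y * ψ y + b y * φ y)
    (hφ : deriv φ x = c x * ψ x + d x * φ x)
    (ha : HasDerivAt a a' x) (hb : HasDerivAt b b' x)
    (hψx : DifferentiableAt 𝕜 ψ x) (hφx : DifferentiableAt 𝕜 φ x) :
    DifferentiableAt 𝕜 (deriv ψ) x ∧
      b x * deriv (deriv ψ) x = (b' + b x * (a x + d x)) * deriv ψ x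
        + (b x * a' - a x * b' + b x * (b x * c x - a x * d x)) * ψ x := by
  have h := hasDerivAt_deriv_of_linear_system hψ ha hb hψx hφx
  exact ⟨h.differentiableAt, mul_secondDeriv_eq_of_linear_system hψ.self_of_nhds hφ h.deriv⟩

end LinearSystem

theorem grover_mul_deriv_deriv_eq {κ ψ φ : ℝ → ℂ} {κ' K s : ℂ} {r : ℝ}
    (hs : s ^ 2 = K) (hs0 : s ≠ 0) (hκ : HasDerivAt κ κ' r)
    (hψ : ∀ᶠ y in 𝓝 r, deriv ψ y = κ y * (K * (1 - y) * ψ y - s * (1 - y) * φ y))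
    (hφ : deriv φ r = κ r * (-s * (1 - r) * ψ r + (1 + r * K) * φ r))
    (hψr : DifferentiableAt ℝ ψ r) (hφr : DifferentiableAt ℝ φ r) :
    DifferentiableAt ℝ (deriv ψ) r ∧
      κ r * (1 - r) * deriv (deriv ψ) r
        = (κ' * (1 - r) - κ r + κ r ^ 2 * (1 - r) * (K + 1)) * deriv ψ r
          - K * κ r ^ 3 * (1 - r) ^ 2 * r * (K + 1) * ψ r := by
  have h1 : HasDerivAt (fun y : ℝ => 1 - (y : ℂ)) (-1) r := by
    simpa using ((hasDerivAt_id r).ofReal_comp).const_sub (1 : ℂ)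
  have hm : HasDerivAt (fun y : ℝ => κ y * (1 - y)) (κ' * (1 - r) - κ r) r := by
    simpa [sub_eq_add_neg] using hκ.fun_mul h1
  obtain ⟨hd, h⟩ := mul_deriv_deriv_eq_of_linear_system (c := fun y => -s * (κ y * (1 - y)))
    (d := fun y => κ y * (1 + y * K))
    (hψ.mono fun y hy => hy.trans (by ring)) (hφ.trans (by ring))
    (hm.const_mul K) (hm.const_mul (-s)) hψr hφr
  refine ⟨hd, mul_left_cancel₀ (neg_ne_zero.mpr hs0) ?_⟩
  linear_combination h - s * κ r ^ 3 * (1 - r) ^ 3 * ψ r * hs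

/-- the marked-state amplitude `ψ` of the coupled Grover Schrödinger system is
twice differentiable on `(0,1)` and satisfies the decoupled second-order equation
`ε²(1-r)ψ″ + ε[ε(1 - (g′/g)(1-r)) + i(1-r)g]ψ′ - (g²K(1-r)²r/(K+1))ψ = 0`. -/
theorem grover_psi_second_order_ode
    (K : ℝ) (hK : 1 ≤ K) (ε : ℝ) (hε : ε ≠ 0) (g : ℝ → ℝ)
    (hg : ∀ r ∈ Set.Ioo (0 : ℝ) 1, DifferentiableAt ℝ g r)
    (hgne : ∀ r ∈ Set.Ioo (0 : ℝ) 1, g r ≠ 0)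
    (ψ φ : ℝ → ℂ)
    (hψd : ∀ r ∈ Set.Ioo (0 : ℝ) 1, DifferentiableAt ℝ ψ r)
    (hφd : ∀ r ∈ Set.Ioo (0 : ℝ) 1, DifferentiableAt ℝ φ r)
    (heq1 : ∀ r ∈ Set.Ioo (0 : ℝ) 1,
      Complex.I * (ε : ℂ) * deriv ψ r =
        ((g r : ℂ) / ((K : ℂ) + 1)) *
          ((K : ℂ) * (1 - (r : ℂ)) * ψ r
            - (Real.sqrt K : ℂ) * (1 - (r : ℂ)) * φ r))
    (heq2 : ∀ r ∈ Set.Ioo (0 : ℝ) 1,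
      Complex.I * (ε : ℂ) * deriv φ r =
        ((g r : ℂ) / ((K : ℂ) + 1)) *
          (-(Real.sqrt K : ℂ) * (1 - (r : ℂ)) * ψ r
            + (1 + (r : ℂ) * (K : ℂ)) * φ r)) :
    ∀ r ∈ Set.Ioo (0 : ℝ) 1,
      DifferentiableAt ℝ (deriv ψ) r
      ∧ (ε : ℂ) ^ 2 * (1 - (r : ℂ)) * deriv (deriv ψ) r
          + (ε : ℂ) * ((ε : ℂ) * (1 - ((deriv g r / g r : ℝ) : ℂ) * (1 - (r : ℂ)))
              + Complex.I * (1 - (r : ℂ)) * (g r : ℂ)) * deriv ψ r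
          - ((g r : ℂ) ^ 2 * (K : ℂ) * (1 - (r : ℂ)) ^ 2 * (r : ℂ) / ((K : ℂ) + 1)) * ψ r
        = 0 := by
  intro r hr
  have hK0 : 0 < K := by linarith
  have hK1 : (K : ℂ) + 1 ≠ 0 := by exact_mod_cast (by linarith : K + 1 ≠ 0)
  have hεC : (ε : ℂ) ≠ 0 := by exact_mod_cast hε
  have hIε : Complex.I * ε ≠ 0 := mul_ne_zero Complex.I_ne_zero hεC
  have hgr : (g r : ℂ) ≠ 0 := by exact_mod_cast hgne r hr
  set κ : ℝ → ℂ := fun y => (g y : ℂ) / (Complex.I * ε * (K + 1)) with hκ_def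
  have hκ : HasDerivAt κ (((deriv g r : ℝ) : ℂ) / (Complex.I * ε * (K + 1))) r :=
    (hg r hr).hasDerivAt.ofReal_comp.div_const _
  have hs : ((Real.sqrt K : ℝ) : ℂ) ^ 2 = K := by
    norm_cast; exact Real.sq_sqrt hK0.le
  have hs0 : ((Real.sqrt K : ℝ) : ℂ) ≠ 0 := by exact_mod_cast (Real.sqrt_pos.mpr hK0).ne'
  have hψ : ∀ᶠ y in 𝓝 r, deriv ψ y = κ y * (K * (1 - y) * ψ y - Real.sqrt K * (1 - y) * φ y) := by
    filter_upwards [isOpen_Ioo.mem_nhds hr] with y hy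
    exact eq_div_mul_of_mul_eq hIε (heq1 y hy)
  have hφ : deriv φ r = κ r * (-Real.sqrt K * (1 - r) * ψ r + (1 + r * K) * φ r) :=
    eq_div_mul_of_mul_eq hIε (heq2 r hr)
  obtain ⟨hd, h⟩ := grover_mul_deriv_deriv_eq hs hs0 hκ hψ hφ (hψd r hr) (hφd r hr)
  refine ⟨hd, ?_⟩
  simp only [hκ_def] at h
  push_cast
  field_simp at h ⊢
  linear_combination -h + (g r * ε ^ 2 * (K + 1) * (1 - r) * deriv (deriv ψ) r
    - ε ^ 2 * (K + 1) * ((1 - r) * ((deriv g r : ℝ) : ℂ) - g r) * deriv ψ r) * Complex.I_sq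
end

section
/- Let K ≥ 1 be a real number, ε a nonzero real number, and g : (0,1) → ℝ differentiable and nonvanishing. Suppose ψ, φ : (0,1) → ℂ are differentiable and satisfy i ε ψ′(r) = (g(r)/(K+1)) [K(1−r) ψ(r) − √K (1−r) φ(r)] and i ε φ′(r) = (g(r)/(K+1)) [−√K(1−r) ψ(r) + (1+rK) φ(r)] on (0,1). Then φ is twice differentiable on (0,1) and satisfies the decoupled second-order equation ε² (1−r) φ″(r) + ε [ε(1 − (g′(r)/g(r))(1−r)) + i(1−r) g(r)] φ′(r) + (−g(r)² K (1−r)² r/(K+1) + i g(r) ε) φ(r) = 0 for all r ∈ (0,1). -/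
/-!
Write the system as `u' = a u + b v`, `v' = c u + d v`. Differentiating the second equation and
substituting `c u = v' - d v`, `c u' = a (v' - d v) + b c v` eliminates `u`:
`c v'' - (c' + (a + d) c) v' + (c' d - c d' + c (a d - b c)) v = 0`.
For the Grover system `(a, b, c, d) = w · (K(1-r), -√K(1-r), -√K(1-r), 1+rK)` with
`w = g / ((K+1) i ε)`, the coefficients collapse to `a + d = (K+1) w`, `c' d - c d' = √K (K+1) w²` and
`a d - b c = K (K+1) r (1-r) w²`; multiplying by `-ε² / (√K w)` gives the stated equation.
-/

open Complex Filter Topology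

theorem eq_div_mul_mul_of_mul_eq {F : Type*} [Field F] {κ D G L X : F} (hκ : κ ≠ 0)
    (h : κ * D = G / L * X) : D = G / (L * κ) * X := by
  rw [← inv_mul_cancel_left₀ hκ D, h]
  ring

theorem second_order_ode_snd_of_linear_system {𝕜 𝔸 : Type*} [NontriviallyNormedField 𝕜]
    [NormedCommRing 𝔸] [NormedAlgebra 𝕜 𝔸] {u v a b c d : 𝕜 → 𝔸} {S : Set 𝕜} {r : 𝕜} {c' d' : 𝔸}
    (hS : S ∈ 𝓝 r) (hc : HasDerivAt c c' r) (hd : HasDerivAt d d' r)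
    (hu : DifferentiableAt 𝕜 u r) (hv : DifferentiableAt 𝕜 v r)
    (hu' : deriv u r = a r * u r + b r * v r)
    (hv' : ∀ x ∈ S, deriv v x = c x * u x + d x * v x) :
    DifferentiableAt 𝕜 (deriv v) r ∧
      c r * deriv (deriv v) r - (c' + (a r + d r) * c r) * deriv v r
        + (c' * d r - c r * d' + c r * (a r * d r - b r * c r)) * v r = 0 := by
  have hv'' : HasDerivAt (deriv v) (c' * u r + c r * deriv u r + (d' * v r + d r * deriv v r)) r :=
    ((hc.mul hu.hasDerivAt).add (hd.mul hv.hasDerivAt)).congr_of_eventuallyEq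
      (eventually_of_mem hS hv')
  refine ⟨hv''.differentiableAt, ?_⟩
  rw [hv''.deriv, hu', hv' r (mem_of_mem_nhds hS)]
  ring

theorem grover_system_snd_second_order_ode {ψ φ w : ℝ → ℂ} {S : Set ℝ} {r : ℝ} {s w' : ℂ}
    (hS : S ∈ 𝓝 r) (hs : s ≠ 0) (hw : HasDerivAt w w' r)
    (hψ : DifferentiableAt ℝ ψ r) (hφ : DifferentiableAt ℝ φ r)
    (hψ' : deriv ψ r = w r * (s ^ 2 * (1 - r) * ψ r - s * (1 - r) * φ r))
    (hφ' : ∀ x ∈ S, deriv φ x = w x * (-s * (1 - x) * ψ x + (1 + x * s ^ 2) * φ x)) :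
    DifferentiableAt ℝ (deriv φ) r ∧
      (1 - r) * w r * deriv (deriv φ) r
        + (w r - (1 - r) * w' - (s ^ 2 + 1) * (1 - r) * w r ^ 2) * deriv φ r
        - (s ^ 2 + 1) * w r ^ 2 * (1 - s ^ 2 * r * (1 - r) ^ 2 * w r) * φ r = 0 := by
  have hid : HasDerivAt (fun x : ℝ => (x : ℂ)) 1 r := (hasDerivAt_id r).ofReal_comp
  have hc : HasDerivAt (fun x : ℝ => -s * (1 - x) * w x) (s * w r - s * (1 - r) * w') r :=
    (((hid.const_sub 1).const_mul (-s)).mul hw).congr_deriv (by ring)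
  have hd : HasDerivAt (fun x : ℝ => (1 + x * s ^ 2) * w x) (s ^ 2 * w r + (1 + r * s ^ 2) * w') r :=
    (((hid.mul_const (s ^ 2)).const_add 1).mul hw).congr_deriv (by ring)
  obtain ⟨hdiff, hode⟩ := second_order_ode_snd_of_linear_system hS hc hd hψ hφ
    (a := fun x => s ^ 2 * (1 - x) * w x) (b := fun x => -s * (1 - x) * w x)
    (by rw [hψ']; ring) (fun x hx => by rw [hφ' x hx]; ring)
  refine ⟨hdiff, mul_left_cancel₀ (neg_ne_zero.mpr hs) ?_⟩
  linear_combination hode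

/-- the unmarked amplitude `φ` of the coupled Grover Schrödinger system is
twice differentiable on `(0,1)` and satisfies the decoupled second-order equation
`ε²(1-r)φ″ + ε[ε(1 - (g′/g)(1-r)) + i(1-r)g]φ′ + (-g²K(1-r)²r/(K+1) + igε)φ = 0`. -/
theorem grover_phi_second_order_ode
    (K : ℝ) (hK : 1 ≤ K) (ε : ℝ) (hε : ε ≠ 0) (g : ℝ → ℝ)
    (hg : ∀ r ∈ Set.Ioo (0 : ℝ) 1, DifferentiableAt ℝ g r)
    (hgne : ∀ r ∈ Set.Ioo (0 : ℝ) 1, g r ≠ 0)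
    (ψ φ : ℝ → ℂ)
    (hψd : ∀ r ∈ Set.Ioo (0 : ℝ) 1, DifferentiableAt ℝ ψ r)
    (hφd : ∀ r ∈ Set.Ioo (0 : ℝ) 1, DifferentiableAt ℝ φ r)
    (heq1 : ∀ r ∈ Set.Ioo (0 : ℝ) 1,
      Complex.I * (ε : ℂ) * deriv ψ r =
        ((g r : ℂ) / ((K : ℂ) + 1)) *
          ((K : ℂ) * (1 - (r : ℂ)) * ψ r
            - (Real.sqrt K : ℂ) * (1 - (r : ℂ)) * φ r))
    (heq2 : ∀ r ∈ Set.Ioo (0 : ℝ) 1,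
      Complex.I * (ε : ℂ) * deriv φ r =
        ((g r : ℂ) / ((K : ℂ) + 1)) *
          (-(Real.sqrt K : ℂ) * (1 - (r : ℂ)) * ψ r
            + (1 + (r : ℂ) * (K : ℂ)) * φ r)) :
    ∀ r ∈ Set.Ioo (0 : ℝ) 1,
      DifferentiableAt ℝ (deriv φ) r
      ∧ (ε : ℂ) ^ 2 * (1 - (r : ℂ)) * deriv (deriv φ) r
          + (ε : ℂ) * ((ε : ℂ) * (1 - ((deriv g r / g r : ℝ) : ℂ) * (1 - (r : ℂ)))
              + Complex.I * (1 - (r : ℂ)) * (g r : ℂ)) * deriv φ r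
          + (-((g r : ℂ) ^ 2 * (K : ℂ) * (1 - (r : ℂ)) ^ 2 * (r : ℂ) / ((K : ℂ) + 1))
              + Complex.I * (g r : ℂ) * (ε : ℂ)) * φ r
        = 0 := by
  intro r hr
  have hK1 : (K : ℂ) + 1 ≠ 0 := by exact_mod_cast (by linarith : K + 1 ≠ 0)
  have hIε : I * (ε : ℂ) ≠ 0 := mul_ne_zero I_ne_zero (by exact_mod_cast hε)
  have hg0 : (g r : ℂ) ≠ 0 := by exact_mod_cast hgne r hr
  have hs0 : (Real.sqrt K : ℂ) ≠ 0 := by exact_mod_cast (Real.sqrt_pos.mpr (by linarith)).ne'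
  have hsq : (Real.sqrt K : ℂ) ^ 2 = K := by exact_mod_cast Real.sq_sqrt (by linarith)
  set w : ℝ → ℂ := fun x => (g x : ℂ) / ((K + 1) * (I * ε))
  set w' : ℂ := (deriv g r : ℝ) / ((K + 1) * (I * ε))
  have hw : HasDerivAt w w' r := (hg r hr).hasDerivAt.ofReal_comp.div_const _
  obtain ⟨hdiff, hode⟩ := grover_system_snd_second_order_ode (Ioo_mem_nhds hr.1 hr.2) hs0 hw
    (hψd r hr) (hφd r hr) (by rw [eq_div_mul_mul_of_mul_eq hIε (heq1 r hr), hsq])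
    (fun x hx => by rw [eq_div_mul_mul_of_mul_eq hIε (heq2 x hx), hsq])
  refine ⟨hdiff, ?_⟩
  have hgw : (g r : ℂ) = (K + 1) * (I * ε) * w r := (mul_div_cancel₀ _ (mul_ne_zero hK1 hIε)).symm
  have hρ : ((deriv g r / g r : ℝ) : ℂ) * w r = w' := by
    push_cast; exact div_mul_div_cancel₀ hg0
  rw [hsq] at hode
  rw [hgw]
  apply mul_left_cancel₀ (show w r ≠ 0 from div_ne_zero hg0 (mul_ne_zero hK1 hIε))
  linear_combination (norm := skip) ε ^ 2 * hode - ε ^ 2 * (1 - r) * deriv φ r * hρ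
  field_simp
  ring_nf
  simp only [I_sq]
  ring
end

section
/- Let K ≥ 1 be a real number and define F⁺ : (0,1) → ℝ by F⁺(r) = (1−r) / √( √(K+1) · Δ(r) · [K(2r−1) + (K+1)Δ(r) + 1] ). Then F⁺ is positive and differentiable on (0,1) and satisfies the transport equation F⁺′(r)/F⁺(r) = −(1/2)[Δ′(r)/Δ(r) + 1/(1−r) + 1/((1−r) Δ(r))] for all r ∈ (0,1). -/
/-!
Write `Δ` for the gap and `B = K(2r-1) + (K+1)Δ + 1`, so that `F⁺ = (1-r)(√(K+1) Δ B)^{-1/2}`.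
Differentiating `(K+1)Δ² = K+1-4Kr(1-r)` gives `(K+1)ΔΔ' = -2K(1-2r)`, and with both identities
one checks `(1-r)ΔB' = (1-Δ)B`, i.e. `B'/B = 1/((1-r)Δ) - 1/(1-r)`. Taking logarithmic derivatives,
`F⁺'/F⁺ = -1/(1-r) - (Δ'/Δ + B'/B)/2`, which is the transport equation after substituting `B'/B`.
That `B > 0` (so that everything is defined) follows from
`((K+1)Δ)² - (K(1-2r) - 1)² = 4K(1-r)²`.
-/

/-- The spectral gap `Δ(r) = √(1 - 4 K r (1-r)/(K+1))` of the restricted Grover Hamiltonian. -/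
noncomputable def groverGap (K r : ℝ) : ℝ :=
  Real.sqrt (1 - 4 * K * r * (1 - r) / (K + 1))

/-- The zeroth-order WKB amplitude
`F⁺(r) = (1-r)/√(√(K+1) Δ(r) [K(2r-1) + (K+1)Δ(r) + 1])`. -/
noncomputable def wkbFplus (K : ℝ) : ℝ → ℝ :=
  fun r => (1 - r) /
    Real.sqrt (Real.sqrt (K + 1) * groverGap K r *
      (K * (2 * r - 1) + (K + 1) * groverGap K r + 1))

open Real

theorem logDeriv_fun_sqrt {f : ℝ → ℝ} {x : ℝ} (hf : DifferentiableAt ℝ f x) (hx : 0 < f x) :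
    logDeriv (fun y => √(f y)) x = logDeriv f x / 2 := by
  have hsqrt := sqrt_pos.2 hx
  rw [logDeriv_apply, logDeriv_apply, (hf.hasDerivAt.sqrt hx.ne').deriv]
  field_simp
  rw [sq_sqrt hx.le]

section Grover

variable {K r : ℝ}

theorem groverGap_radicand_pos (hK : 0 ≤ K) (r : ℝ) :
    0 < 1 - 4 * K * r * (1 - r) / (K + 1) := by
  rw [sub_pos, div_lt_one (by linarith)]
  nlinarith [sq_nonneg (2 * r - 1)]

theorem groverGap_pos (hK : 0 ≤ K) (r : ℝ) : 0 < groverGap K r :=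
  sqrt_pos.2 (groverGap_radicand_pos hK r)

theorem add_one_mul_groverGap_sq (hK : 0 ≤ K) (r : ℝ) :
    (K + 1) * groverGap K r ^ 2 = K + 1 - 4 * K * r * (1 - r) := by
  rw [groverGap, sq_sqrt (groverGap_radicand_pos hK r).le]
  field_simp

theorem hasDerivAt_groverGap (hK : 0 ≤ K) (r : ℝ) :
    HasDerivAt (groverGap K) (-(2 * K * (1 - 2 * r)) / ((K + 1) * groverGap K r)) r := by
  have hpoly : HasDerivAt (fun x => 1 - 4 * K * x * (1 - x) / (K + 1))
      (-(4 * K * (1 - 2 * r)) / (K + 1)) r := by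
    refine ((((hasDerivAt_id' r).const_mul (4 * K)).mul
      ((hasDerivAt_id' r).const_sub 1)).div_const (K + 1)).const_sub 1 |>.congr_deriv ?_
    ring
  refine (hpoly.sqrt (groverGap_radicand_pos hK r).ne').congr_deriv ?_
  change _ / (2 * groverGap K r) = _
  have := groverGap_pos hK r
  field_simp
  ring

theorem differentiable_groverGap (hK : 0 ≤ K) : Differentiable ℝ (groverGap K) :=
  fun r => (hasDerivAt_groverGap hK r).differentiableAt

noncomputable def groverBracket (K r : ℝ) : ℝ :=
  K * (2 * r - 1) + (K + 1) * groverGap K r + 1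

theorem groverBracket_pos (hK : 0 ≤ K) (hr : r ≠ 1) : 0 < groverBracket K r := by
  have hΔ := groverGap_pos hK r
  have hsq := add_one_mul_groverGap_sq hK r
  have hdiff :
      ((K + 1) * groverGap K r) ^ 2 - (K * (1 - 2 * r) - 1) ^ 2 = 4 * K * (1 - r) ^ 2 := by
    linear_combination (K + 1) * hsq
  have h1r : 0 < (1 - r) ^ 2 := by positivity
  unfold groverBracket
  rcases le_or_gt (K * (1 - 2 * r)) 1 with h | h
  · nlinarith
  · have hK0 : 0 < K := hK.lt_of_ne (by rintro rfl; linarith [zero_mul (1 - 2 * r)])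
    have hlt : (K * (1 - 2 * r) - 1) ^ 2 < ((K + 1) * groverGap K r) ^ 2 := by
      nlinarith [mul_pos hK0 h1r]
    have := lt_of_pow_lt_pow_left₀ 2 (by positivity) hlt
    linarith

theorem hasDerivAt_groverBracket (hK : 0 ≤ K) (r : ℝ) :
    HasDerivAt (groverBracket K) (2 * K - 2 * K * (1 - 2 * r) / groverGap K r) r := by
  have hΔ := groverGap_pos hK r
  have hK1 : K + 1 ≠ 0 := by positivity
  refine ((((hasDerivAt_id' r).const_mul 2).sub_const 1).const_mul K).add
    ((hasDerivAt_groverGap hK r).const_mul (K + 1)) |>.add_const 1 |>.congr_deriv ?_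
  field_simp
  ring

theorem logDeriv_groverBracket (hK : 0 ≤ K) (hr : r ≠ 1) :
    logDeriv (groverBracket K) r = (1 - groverGap K r) / ((1 - r) * groverGap K r) := by
  have hΔ := groverGap_pos hK r
  have hB := groverBracket_pos hK hr
  have h1r : 1 - r ≠ 0 := sub_ne_zero.2 hr.symm
  rw [logDeriv_apply, (hasDerivAt_groverBracket hK r).deriv, div_eq_div_iff hB.ne' (by positivity)]
  unfold groverBracket
  field_simp
  linear_combination add_one_mul_groverGap_sq hK r

theorem wkbFplus_eq (K : ℝ) :
    wkbFplus K = fun r => (1 - r) / √(√(K + 1) * groverGap K r * groverBracket K r) :=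
  rfl

theorem wkbFplus_radicand_pos (hK : 0 ≤ K) (hr : r ≠ 1) :
    0 < √(K + 1) * groverGap K r * groverBracket K r := by
  have := groverGap_pos hK r
  have := groverBracket_pos hK hr
  have : 0 < √(K + 1) := sqrt_pos.2 (by linarith)
  positivity

theorem differentiableAt_wkbFplus_radicand (hK : 0 ≤ K) (r : ℝ) :
    DifferentiableAt ℝ (fun y => √(K + 1) * groverGap K y * groverBracket K y) r :=
  ((differentiable_groverGap hK r).const_mul _).mul
    (hasDerivAt_groverBracket hK r).differentiableAt

theorem wkbFplus_pos (hK : 0 ≤ K) (hr : r < 1) : 0 < wkbFplus K r :=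
  div_pos (sub_pos.2 hr) (sqrt_pos.2 (wkbFplus_radicand_pos hK hr.ne))

theorem differentiableAt_wkbFplus (hK : 0 ≤ K) (hr : r ≠ 1) :
    DifferentiableAt ℝ (wkbFplus K) r := by
  have hpos := wkbFplus_radicand_pos hK hr
  rw [wkbFplus_eq]
  exact (differentiableAt_id.const_sub 1).div
    ((differentiableAt_wkbFplus_radicand hK r).sqrt hpos.ne') (sqrt_pos.2 hpos).ne'

theorem logDeriv_wkbFplus (hK : 0 ≤ K) (hr : r ≠ 1) :
    logDeriv (wkbFplus K) r = -(1 / 2) * (logDeriv (groverGap K) r + 1 / (1 - r)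
      + 1 / ((1 - r) * groverGap K r)) := by
  have hΔ := groverGap_pos hK r
  have hB := groverBracket_pos hK hr
  have hB' := (hasDerivAt_groverBracket hK r).differentiableAt
  have hpos := wkbFplus_radicand_pos hK hr
  have hprod := differentiableAt_wkbFplus_radicand hK r
  have h1r : 1 - r ≠ 0 := sub_ne_zero.2 hr.symm
  have hK1 : √(K + 1) ≠ 0 := (sqrt_pos.2 (by linarith)).ne'
  rw [wkbFplus_eq, logDeriv_div _ h1r (sqrt_pos.2 hpos).ne' (by fun_prop) (hprod.sqrt hpos.ne'),
    logDeriv_fun_sqrt hprod hpos,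
    logDeriv_mul (f := fun y => √(K + 1) * groverGap K y) _ (mul_ne_zero hK1 hΔ.ne') hB.ne'
      ((differentiable_groverGap hK r).const_mul _) hB',
    logDeriv_const_mul _ _ hK1, logDeriv_groverBracket hK hr]
  have hlin : logDeriv (fun z : ℝ => 1 - z) r = -1 / (1 - r) := by
    simp [logDeriv_apply]
  rw [hlin]
  field_simp
  ring

end Grover

/-- `F⁺` is positive and differentiable on `(0,1)` and satisfies the transport
equation `F⁺′/F⁺ = -(1/2)[Δ′/Δ + 1/(1-r) + 1/((1-r)Δ)]`. -/
theorem grover_wkb_Fplus_transport (K : ℝ) (hK : 1 ≤ K) :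
    ∀ r ∈ Set.Ioo (0 : ℝ) 1,
      0 < wkbFplus K r
      ∧ DifferentiableAt ℝ (wkbFplus K) r
      ∧ deriv (wkbFplus K) r / wkbFplus K r
          = -(1 / 2) * (deriv (groverGap K) r / groverGap K r + 1 / (1 - r)
              + 1 / ((1 - r) * groverGap K r)) := by
  intro r hr
  have hK0 : 0 ≤ K := by linarith
  exact ⟨wkbFplus_pos hK0 hr.2, differentiableAt_wkbFplus hK0 hr.2.ne,
    logDeriv_wkbFplus hK0 hr.2.ne⟩
end
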